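/- Fix 1 ≤ d ≤ n−1 and let H′ be the subgroup of GL_n(ℝ) consisting of block matrices [[γ, v],[0, δ]] with γ ∈ GL_d(ℤ), v ∈ ℝ^{d×(n−d)}, δ ∈ GL_{n−d}(ℤ). Define f′ : GL_n(ℝ) → GL_n(ℝ) by f′(g) = [B | D], where B is the matrix of the first d columns of g and D is the matrix of the last n−d columns of (gᵀ)⁻¹. Then f′(g) ∈ GL_n(ℝ) for every g ∈ GL_n(ℝ), f′(gh)·H′ = f′(g)·H′ for every g ∈ GL_n(ℝ) and h ∈ H′, and f′(f′(g)) ∈ g·H′; consequently f′ induces a well-defined involutive bijection of the coset space GL_n(ℝ)/H′ (which, under the identification of GL_n(ℝ)/H′ with the space of pairs (Λ, L) of a d-lattice Λ and an (n−d)-lattice L in V_Λ^⊥, is the map (Λ, L) ↦ (Λ, L*)). -/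

import Mathlib

open Matrix

noncomputable section

/-- The set of all integer linear combinations of the columns of `B`
(the `ℤ`-span of the columns of `B`). -/
def zspan {n d : ℕ} (B : Matrix (Fin n) (Fin d) ℝ) : Set (Fin n → ℝ) :=
  Set.range fun c : Fin d → ℤ => B.mulVec fun j => (c j : ℝ)

/-- `B` is a `ℤ`-basis matrix for `Λ`: its columns are `ℝ`-linearly independent
and their `ℤ`-span is `Λ`. -/
def IsLatticeBasis {n d : ℕ} (B : Matrix (Fin n) (Fin d) ℝ) (Λ : Set (Fin n → ℝ)) : Prop :=
  LinearIndependent ℝ (fun j : Fin d => fun i : Fin n => B i j) ∧ Λ = zspan B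

/-- `Λ` is a `d`-lattice in `ℝⁿ`: it is generated over `ℤ` by `d`
linearly independent vectors. -/
def IsDLattice {n : ℕ} (d : ℕ) (Λ : Set (Fin n → ℝ)) : Prop :=
  ∃ B : Matrix (Fin n) (Fin d) ℝ, IsLatticeBasis B Λ

/-- `ℤⁿ` viewed as a subset of `ℝⁿ`. -/
def intLattice (n : ℕ) : Set (Fin n → ℝ) :=
  Set.range fun c : Fin n → ℤ => fun i => (c i : ℝ)

/-- `Λ` is primitive inside `Δ` : `Λ = Δ ∩ span_ℝ Λ`. -/
def IsPrimitiveIn {n : ℕ} (Λ Δ : Set (Fin n → ℝ)) : Prop :=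
  Λ = Δ ∩ (Submodule.span ℝ Λ : Set (Fin n → ℝ))

/-- The dual lattice `Λ* = {y ∈ V_Λ : ⟨x,y⟩ ∈ ℤ for all x ∈ Λ}`. -/
def dualLattice {n : ℕ} (Λ : Set (Fin n → ℝ)) : Set (Fin n → ℝ) :=
  {y | y ∈ Submodule.span ℝ Λ ∧ ∀ x ∈ Λ, ∃ m : ℤ, x ⬝ᵥ y = (m : ℝ)}

/-- Orthogonal complement with respect to the standard inner product on `ℝⁿ`. -/
def perp {n : ℕ} (V : Submodule ℝ (Fin n → ℝ)) : Submodule ℝ (Fin n → ℝ) where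
  carrier := {y | ∀ x ∈ V, x ⬝ᵥ y = 0}
  add_mem' := by
    intro a b ha hb x hx
    simp [dotProduct_add, ha x hx, hb x hx]
  zero_mem' := by
    intro x hx
    simp
  smul_mem' := by
    intro c a ha x hx
    simp [dotProduct_smul, ha x hx]

/-- The `n × d` matrix of the first `d` columns of `g`. -/
def firstColsR {n d : ℕ} (h : d ≤ n) (g : Matrix (Fin n) (Fin n) ℝ) :
    Matrix (Fin n) (Fin d) ℝ :=
  Matrix.of fun i j => g i (Fin.castLE h j)

/-- The `n × (n-d)` matrix of the last `n - d` columns of `g`. -/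
def lastColsR {n d : ℕ} (h : d ≤ n) (g : Matrix (Fin n) (Fin n) ℝ) :
    Matrix (Fin n) (Fin (n - d)) ℝ :=
  Matrix.of fun i (j : Fin (n - d)) => g i ⟨d + (j : ℕ), by have := j.isLt; omega⟩

/-- The map `f' : g ↦ [B | D]` keeping the first `d` columns of `g` and
replacing the last `n - d` columns by those of `(gᵀ)⁻¹`. -/
def dualizePair {n : ℕ} (d : ℕ) (g : Matrix (Fin n) (Fin n) ℝ) :
    Matrix (Fin n) (Fin n) ℝ :=
  Matrix.of fun i j => if (j : ℕ) < d then g i j else (gᵀ)⁻¹ i j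

/-- Membership in the subgroup `H'` of block matrices `[[γ, v], [0, δ]]` with
`γ ∈ GL_d(ℤ)`, `v ∈ ℝ^{d × (n-d)}`, `δ ∈ GL_{n-d}(ℤ)`. -/
def memH' {n : ℕ} (d : ℕ) (h : Matrix (Fin n) (Fin n) ℝ) : Prop :=
  ∃ (hle : d ≤ n) (γ : Matrix (Fin d) (Fin d) ℤ)
    (v : Matrix (Fin d) (Fin (n - d)) ℝ)
    (δ : Matrix (Fin (n - d)) (Fin (n - d)) ℤ),
    IsUnit γ.det ∧ IsUnit δ.det ∧
    h = Matrix.reindex (finSumFinEquiv.trans (finCongr (by omega)))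
          (finSumFinEquiv.trans (finCongr (by omega)))
          (Matrix.fromBlocks (γ.map fun a => (a : ℝ)) v 0
            (δ.map fun a => (a : ℝ)))


/-!
Write `g = [B | C]` in column blocks and `D` for the last `n - d` columns of `(gᵀ)⁻¹`. These
columns are characterised by `gᵀ D = [0; 1]`, i.e. `Bᵀ D = 0` and `Cᵀ D = 1`. Hence
`gᵀ f'(g) = [[Bᵀ B, 0], [Cᵀ B, 1]]`, which is invertible since the Gram matrix `Bᵀ B` is. The same
characterisation gives `f'(g u) = f'(g) diag(A, E⁻ᵀ)` for `u = [[A, X], [0, E]]` with `A`, `E`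
invertible, and `f'(f'(g)) = [B | C - B (Bᵀ B)⁻¹ Bᵀ C] = g [[1, -(Bᵀ B)⁻¹ Bᵀ C], [0, 1]]`.
For the lattices: the columns of `D` are orthogonal to `B`, pair with the projections `π C` to the
identity matrix, and lie in the span of `π C` (as `π` fixes `V_Λ^⊥`), so they form the basis dual
to `π C`.
-/

section BlockDualize

variable {ι κ R : Type*} [CommRing R]

lemma toCols₂_one [DecidableEq ι] [DecidableEq κ] :
    toCols₂ (1 : Matrix (ι ⊕ κ) (ι ⊕ κ) R) = fromRows 0 1 := by
  ext (i | i) j <;> simp [one_apply]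

variable [Fintype ι] [Fintype κ]

lemma toCols₂_mul_fromBlocks_zero₁₂ {m : Type*} (Y : Matrix m (ι ⊕ κ) R) (P : Matrix ι ι R)
    (Q : Matrix κ ι R) (S : Matrix κ κ R) :
    toCols₂ (Y * fromBlocks P 0 Q S) = toCols₂ Y * S := by
  rw [← fromCols_toCols Y, fromCols_mul_fromBlocks]
  simp

variable [DecidableEq ι] [DecidableEq κ]

def dualizeBlocks (G : Matrix (ι ⊕ κ) (ι ⊕ κ) R) : Matrix (ι ⊕ κ) (ι ⊕ κ) R :=
  fromCols (toCols₁ G) (toCols₂ (Gᵀ)⁻¹)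

lemma dualizeBlocks_mul_fromBlocks (G : Matrix (ι ⊕ κ) (ι ⊕ κ) R) {A : Matrix ι ι R}
    (X : Matrix ι κ R) {E : Matrix κ κ R} (hA : IsUnit A.det) (hE : IsUnit E.det) :
    dualizeBlocks (G * fromBlocks A X 0 E) = dualizeBlocks G * fromBlocks A 0 0 (E⁻¹)ᵀ := by
  have hU : ((fromBlocks A X 0 E)ᵀ)⁻¹ =
      fromBlocks (Aᵀ)⁻¹ 0 (-((Eᵀ)⁻¹ * Xᵀ * (Aᵀ)⁻¹)) (Eᵀ)⁻¹ := by
    rw [fromBlocks_transpose, transpose_zero, inv_fromBlocks_zero₁₂_of_isUnit_iff]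
    simp only [isUnit_iff_isUnit_det, det_transpose, hA, hE]
  have hcols₁ : toCols₁ (G * fromBlocks A X 0 E) = toCols₁ G * A := by
    rw [← fromCols_toCols G, fromCols_mul_fromBlocks]
    simp
  rw [dualizeBlocks, dualizeBlocks, transpose_mul, Matrix.mul_inv_rev, hU,
    toCols₂_mul_fromBlocks_zero₁₂, hcols₁, fromCols_mul_fromBlocks, transpose_nonsing_inv]
  simp

lemma transpose_mul_toCols₂_inv_transpose {G : Matrix (ι ⊕ κ) (ι ⊕ κ) R} (hG : IsUnit G.det) :
    Gᵀ * toCols₂ (Gᵀ)⁻¹ = fromRows 0 1 := by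
  rw [← toCols₂_one, ← mul_nonsing_inv Gᵀ (by rwa [det_transpose])]
  rfl

lemma toCols₂_inv_transpose_eq {G : Matrix (ι ⊕ κ) (ι ⊕ κ) R} (hG : IsUnit G.det)
    {Y : Matrix (ι ⊕ κ) κ R} (hY : Gᵀ * Y = fromRows 0 1) : toCols₂ (Gᵀ)⁻¹ = Y := by
  rw [← nonsing_inv_mul_cancel_left Gᵀ Y (by rwa [det_transpose]), hY,
    ← fromCols_toCols (Gᵀ)⁻¹, fromCols_mul_fromRows]
  simp

lemma transpose_toCols_mul_toCols₂_inv_transpose {G : Matrix (ι ⊕ κ) (ι ⊕ κ) R}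
    (hG : IsUnit G.det) :
    (toCols₁ G)ᵀ * toCols₂ (Gᵀ)⁻¹ = 0 ∧ (toCols₂ G)ᵀ * toCols₂ (Gᵀ)⁻¹ = 1 := by
  have h : fromRows (toCols₁ G)ᵀ (toCols₂ G)ᵀ * toCols₂ (Gᵀ)⁻¹ = fromRows 0 1 := by
    rw [← transpose_fromCols, fromCols_toCols]
    exact transpose_mul_toCols₂_inv_transpose hG
  rw [fromRows_mul] at h
  exact fromRows_inj h

lemma transpose_mul_dualizeBlocks {G : Matrix (ι ⊕ κ) (ι ⊕ κ) R} (hG : IsUnit G.det) :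
    Gᵀ * dualizeBlocks G =
      fromBlocks ((toCols₁ G)ᵀ * toCols₁ G) 0 ((toCols₂ G)ᵀ * toCols₁ G) 1 := by
  obtain ⟨hBD, hCD⟩ := transpose_toCols_mul_toCols₂_inv_transpose hG
  have hGt : Gᵀ = fromRows (toCols₁ G)ᵀ (toCols₂ G)ᵀ := by
    rw [← transpose_fromCols, fromCols_toCols]
  rw [dualizeBlocks]
  nth_rewrite 1 [hGt]
  rw [fromRows_mul_fromCols, hBD, hCD]

end BlockDualize

section GramMatrix

variable {ι κ K : Type*} [Fintype ι] [Fintype κ] [DecidableEq ι] [DecidableEq κ]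
  [Field K] [LinearOrder K] [IsStrictOrderedRing K]

lemma isUnit_det_toCols₁_transpose_mul_self {G : Matrix (ι ⊕ κ) (ι ⊕ κ) K} (hG : IsUnit G.det) :
    IsUnit ((toCols₁ G)ᵀ * toCols₁ G).det := by
  rw [← isUnit_iff_isUnit_det, ← mulVec_injective_iff_isUnit, ← coe_mulVecLin,
    ← LinearMap.ker_eq_bot, ker_mulVecLin_transpose_mul_self, LinearMap.ker_eq_bot,
    coe_mulVecLin]
  intro v w hvw
  have hG' := mulVec_injective_iff_isUnit.mpr ((isUnit_iff_isUnit_det G).mpr hG)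
  have h : G *ᵥ Sum.elim v 0 = G *ᵥ Sum.elim w 0 := by
    rw [← fromCols_toCols G, fromCols_mulVec_sumElim, fromCols_mulVec_sumElim, hvw]
  exact (Sum.elim_eq_iff.mp (hG' h)).1

lemma isUnit_det_dualizeBlocks {G : Matrix (ι ⊕ κ) (ι ⊕ κ) K} (hG : IsUnit G.det) :
    IsUnit (dualizeBlocks G).det := by
  have h := congrArg det (transpose_mul_dualizeBlocks hG)
  rw [det_mul, det_transpose, det_fromBlocks_zero₁₂, det_one, mul_one] at h
  exact isUnit_of_mul_isUnit_right (h ▸ isUnit_det_toCols₁_transpose_mul_self hG)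

lemma dualizeBlocks_dualizeBlocks {G : Matrix (ι ⊕ κ) (ι ⊕ κ) K} (hG : IsUnit G.det) :
    dualizeBlocks (dualizeBlocks G) = G * fromBlocks 1
      (-(((toCols₁ G)ᵀ * toCols₁ G)⁻¹ * ((toCols₁ G)ᵀ * toCols₂ G))) 0 1 := by
  set B := toCols₁ G
  set C := toCols₂ G
  set D := toCols₂ (Gᵀ)⁻¹
  set W := -((Bᵀ * B)⁻¹ * (Bᵀ * C))
  obtain ⟨hBD, hCD⟩ : Bᵀ * D = 0 ∧ Cᵀ * D = 1 := transpose_toCols_mul_toCols₂_inv_transpose hG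
  have hDB : Dᵀ * B = 0 := by rw [← transpose_transpose B, ← transpose_mul, hBD, transpose_zero]
  have hDC : Dᵀ * C = 1 := by rw [← transpose_transpose C, ← transpose_mul, hCD, transpose_one]
  have hBW : Bᵀ * B * W = -(Bᵀ * C) := by
    rw [Matrix.mul_neg, ← Matrix.mul_assoc,
      mul_nonsing_inv _ (isUnit_det_toCols₁_transpose_mul_self hG), Matrix.one_mul]
  have hY : (dualizeBlocks G)ᵀ * (B * W + C) = fromRows 0 1 := by
    rw [dualizeBlocks, transpose_fromCols, fromRows_mul, Matrix.mul_add, Matrix.mul_add,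
      ← Matrix.mul_assoc, ← Matrix.mul_assoc, hBW, hDB, hDC, neg_add_cancel, Matrix.zero_mul,
      zero_add]
  rw [dualizeBlocks, toCols₂_inv_transpose_eq (isUnit_det_dualizeBlocks hG) hY]
  conv_rhs => rw [← fromCols_toCols G, fromCols_mul_fromBlocks]
  simp [dualizeBlocks, B, C]

end GramMatrix

section Lattice

variable {n : ℕ}

lemma eq_zero_of_mem_of_mem_perp {V : Submodule ℝ (Fin n → ℝ)} {x : Fin n → ℝ} (hx : x ∈ V)
    (hx' : x ∈ perp V) : x = 0 :=
  dotProduct_self_eq_zero.mp (hx' x hx)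

lemma mem_perp_span_iff {s : Set (Fin n → ℝ)} {y : Fin n → ℝ} :
    y ∈ perp (Submodule.span ℝ s) ↔ ∀ x ∈ s, x ⬝ᵥ y = 0 := by
  refine ⟨fun h x hx => h x (Submodule.subset_span hx), fun h x hx => ?_⟩
  induction hx using Submodule.span_induction with
  | mem x hx => exact h x hx
  | zero => exact zero_dotProduct y
  | add a b _ _ ha hb => rw [add_dotProduct, ha, hb, add_zero]
  | smul c a _ ha => rw [smul_dotProduct, ha, smul_zero]

def IsProjectionOntoPerp (V : Submodule ℝ (Fin n → ℝ)) (π : (Fin n → ℝ) →ₗ[ℝ] (Fin n → ℝ)) :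
    Prop :=
  ∀ x, π x ∈ perp V ∧ x - π x ∈ V

namespace IsProjectionOntoPerp

variable {V : Submodule ℝ (Fin n → ℝ)} {π : (Fin n → ℝ) →ₗ[ℝ] (Fin n → ℝ)}

lemma map_eq_zero (hπ : IsProjectionOntoPerp V π) {v : Fin n → ℝ} (hv : v ∈ V) : π v = 0 :=
  eq_zero_of_mem_of_mem_perp (by simpa using V.sub_mem hv (hπ v).2) (hπ v).1

lemma map_eq_self (hπ : IsProjectionOntoPerp V π) {x : Fin n → ℝ} (hx : x ∈ perp V) :
    π x = x :=
  (sub_eq_zero.mp (eq_zero_of_mem_of_mem_perp (hπ x).2 ((perp V).sub_mem hx (hπ x).1))).symm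

end IsProjectionOntoPerp

lemma mulVec_eq_sum_smul_col {l m : Type*} [Fintype m] (B : Matrix l m ℝ) (c : m → ℝ) :
    B *ᵥ c = ∑ j, c j • B.col j := by
  ext i
  simp [mulVec, dotProduct, Finset.sum_apply, mul_comm]

lemma mulVec_mem_span_range_col {l m : Type*} [Fintype m] (B : Matrix l m ℝ) (c : m → ℝ) :
    B *ᵥ c ∈ Submodule.span ℝ (Set.range B.col) :=
  range_mulVecLin B ▸ LinearMap.mem_range_self B.mulVecLin c

lemma col_mem_zspan {d : ℕ} (B : Matrix (Fin n) (Fin d) ℝ) (j : Fin d) : B.col j ∈ zspan B := by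
  refine ⟨Pi.single j 1, ?_⟩
  ext i
  simp [mulVec, dotProduct, Pi.single_apply]

lemma span_zspan {d : ℕ} (B : Matrix (Fin n) (Fin d) ℝ) :
    Submodule.span ℝ (zspan B) = Submodule.span ℝ (Set.range B.col) := by
  refine le_antisymm (Submodule.span_le.mpr ?_) (Submodule.span_mono ?_)
  · rintro _ ⟨c, rfl⟩
    exact mulVec_mem_span_range_col B _
  · rintro _ ⟨j, rfl⟩
    exact col_mem_zspan B j

theorem zspan_eq_dualLattice {k : ℕ} {P D : Matrix (Fin n) (Fin k) ℝ} (hPD : Pᵀ * D = 1)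
    (hD : ∀ l, D.col l ∈ Submodule.span ℝ (Set.range P.col)) :
    zspan D = dualLattice (zspan P) := by
  have hD_mem : ∀ c, D *ᵥ c ∈ Submodule.span ℝ (Set.range P.col) := fun c =>
    Submodule.span_le.mpr (by rintro _ ⟨l, rfl⟩; exact hD l) (mulVec_mem_span_range_col D c)
  have hdual : ∀ a c, (P *ᵥ a) ⬝ᵥ (D *ᵥ c) = a ⬝ᵥ c := fun a c => by
    rw [← vecMul_transpose, ← dotProduct_mulVec, mulVec_mulVec, hPD, one_mulVec]
  ext y
  constructor
  · rintro ⟨m, rfl⟩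
    refine ⟨span_zspan P ▸ hD_mem _, ?_⟩
    rintro _ ⟨a, rfl⟩
    exact ⟨a ⬝ᵥ m, by rw [hdual]; push_cast [dotProduct]; rfl⟩
  · rintro ⟨hy, hy_int⟩
    choose m hm using fun l => hy_int (P.col l) (col_mem_zspan P l)
    refine ⟨m, ?_⟩
    have hw : y - D *ᵥ (fun l => (m l : ℝ)) ∈ Submodule.span ℝ (Set.range P.col) :=
      Submodule.sub_mem _ (span_zspan P ▸ hy) (hD_mem _)
    have hw' : y - D *ᵥ (fun l => (m l : ℝ)) ∈ perp (Submodule.span ℝ (Set.range P.col)) := by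
      refine mem_perp_span_iff.mpr ?_
      rintro _ ⟨l, rfl⟩
      rw [dotProduct_sub, hm l, ← mulVec_single_one, hdual, single_one_dotProduct, sub_self]
    exact (sub_eq_zero.mp (eq_zero_of_mem_of_mem_perp hw hw')).symm

section Biorthogonal

variable {ι : Type*} {k : ℕ} {M N : Matrix (Fin n) (ι ⊕ Fin k) ℝ}
  {π : (Fin n → ℝ) →ₗ[ℝ] (Fin n → ℝ)}

def projCols (M : Matrix (Fin n) (ι ⊕ Fin k) ℝ) (π : (Fin n → ℝ) →ₗ[ℝ] (Fin n → ℝ)) :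
    Matrix (Fin n) (Fin k) ℝ :=
  of fun i l => π (M.col (Sum.inr l)) i

lemma col_inr_mem_perp [DecidableEq ι] (hNM : Nᵀ * M = 1) (l : Fin k) :
    N.col (Sum.inr l) ∈ perp (Submodule.span ℝ (Set.range fun j => M.col (Sum.inl j))) := by
  refine mem_perp_span_iff.mpr ?_
  rintro _ ⟨j, rfl⟩
  have h := congrFun (congrFun hNM (Sum.inr l)) (Sum.inl j)
  rwa [mul_apply', one_apply_ne Sum.inr_ne_inl, dotProduct_comm] at h

lemma transpose_projCols_mul_toCols₂ [DecidableEq ι] (hNM : Nᵀ * M = 1)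
    (hπ : IsProjectionOntoPerp (Submodule.span ℝ (Set.range fun j => M.col (Sum.inl j))) π) :
    (projCols M π)ᵀ * toCols₂ N = 1 := by
  ext l l'
  have hMN : Mᵀ * N = 1 := by rw [← transpose_transpose N, ← transpose_mul, hNM, transpose_one]
  calc ((projCols M π)ᵀ * toCols₂ N) l l'
      = M.col (Sum.inr l) ⬝ᵥ N.col (Sum.inr l') -
          (M.col (Sum.inr l) - π (M.col (Sum.inr l))) ⬝ᵥ N.col (Sum.inr l') := by
        rw [← sub_dotProduct, sub_sub_cancel]
        rfl
    _ = (Mᵀ * N) (Sum.inr l) (Sum.inr l') := by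
        rw [col_inr_mem_perp hNM l' _ (hπ _).2, sub_zero]
        rfl
    _ = (1 : Matrix (Fin k) (Fin k) ℝ) l l' := by
        simp [hMN, one_apply]

lemma map_mem_span_projCols [Fintype ι] (hMN : M * Nᵀ = 1)
    (hπ : IsProjectionOntoPerp (Submodule.span ℝ (Set.range fun j => M.col (Sum.inl j))) π)
    (x : Fin n → ℝ) : π x ∈ Submodule.span ℝ (Set.range (projCols M π).col) := by
  have hx : x = M *ᵥ (Nᵀ *ᵥ x) := by rw [mulVec_mulVec, hMN, one_mulVec]
  rw [hx, mulVec_eq_sum_smul_col, map_sum, Fintype.sum_sum_type]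
  simp only [map_smul, hπ.map_eq_zero (Submodule.subset_span ⟨_, rfl⟩), smul_zero,
    Finset.sum_const_zero, zero_add]
  exact Submodule.sum_mem _ fun l _ => Submodule.smul_mem _ _ (Submodule.subset_span ⟨l, rfl⟩)

theorem zspan_toCols₂_eq_dualLattice [Fintype ι] [DecidableEq ι] (hMN : M * Nᵀ = 1)
    (hNM : Nᵀ * M = 1)
    (hπ : IsProjectionOntoPerp (Submodule.span ℝ (Set.range fun j => M.col (Sum.inl j))) π) :
    zspan (toCols₂ N) = dualLattice (zspan (projCols M π)) :=
  zspan_eq_dualLattice (transpose_projCols_mul_toCols₂ hNM hπ) fun l =>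
    hπ.map_eq_self (col_inr_mem_perp hNM l) ▸ map_mem_span_projCols hMN hπ _

end Biorthogonal

end Lattice

lemma inv_map_of_isUnit_det {m R S : Type*} [Fintype m] [DecidableEq m] [CommRing R]
    [CommRing S] (f : R →+* S) {M : Matrix m m R} (hM : IsUnit M.det) :
    (M.map f)⁻¹ = M⁻¹.map f :=
  inv_eq_left_inv (by
    rw [← RingHom.mapMatrix_apply, ← RingHom.mapMatrix_apply, ← map_mul, nonsing_inv_mul _ hM,
      map_one])

lemma isUnit_det_map {m R S : Type*} [Fintype m] [DecidableEq m] [CommRing R] [CommRing S]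
    (f : R →+* S) {M : Matrix m m R} (hM : IsUnit M.det) : IsUnit (M.map f).det := by
  rw [← RingHom.mapMatrix_apply, ← RingHom.map_det]
  exact hM.map f

section FinSplit

variable {n d : ℕ}

def finSplit (h : d ≤ n) : Fin d ⊕ Fin (n - d) ≃ Fin n :=
  finSumFinEquiv.trans (finCongr (Nat.add_sub_cancel' h))

lemma reindex_finSplit_mul (h : d ≤ n)
    (A B : Matrix (Fin d ⊕ Fin (n - d)) (Fin d ⊕ Fin (n - d)) ℝ) :
    reindex (finSplit h) (finSplit h) (A * B) =
      reindex (finSplit h) (finSplit h) A * reindex (finSplit h) (finSplit h) B := by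
  simp only [reindex_apply, submatrix_mul_equiv]

lemma dualizePair_reindex (h : d ≤ n)
    (G : Matrix (Fin d ⊕ Fin (n - d)) (Fin d ⊕ Fin (n - d)) ℝ) :
    dualizePair d (reindex (finSplit h) (finSplit h) G) =
      reindex (finSplit h) (finSplit h) (dualizeBlocks G) := by
  have hinv : ((reindex (finSplit h) (finSplit h) G)ᵀ)⁻¹ =
      reindex (finSplit h) (finSplit h) (Gᵀ)⁻¹ := by
    rw [transpose_reindex, inv_reindex]
  ext i j
  obtain ⟨j, rfl⟩ := (finSplit h).surjective j
  rcases j with j | j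
  · simp [dualizePair, dualizeBlocks, finSplit]
  · simp only [dualizePair, of_apply, hinv]
    simp [dualizeBlocks, finSplit]

lemma memH'_reindex_fromBlocks (h : d ≤ n) {γ : Matrix (Fin d) (Fin d) ℤ}
    {δ : Matrix (Fin (n - d)) (Fin (n - d)) ℤ} (hγ : IsUnit γ.det) (hδ : IsUnit δ.det)
    (v : Matrix (Fin d) (Fin (n - d)) ℝ) :
    memH' d (reindex (finSplit h) (finSplit h)
      (fromBlocks (γ.map fun a => (a : ℝ)) v 0 (δ.map fun a => (a : ℝ)))) :=
  ⟨h, γ, v, δ, hγ, hδ, rfl⟩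

end FinSplit

section DualizePair

variable {n d : ℕ}

theorem isUnit_det_dualizePair (h : d ≤ n) {g : Matrix (Fin n) (Fin n) ℝ} (hg : IsUnit g.det) :
    IsUnit (dualizePair d g).det := by
  obtain ⟨G, rfl⟩ := (reindex (finSplit h) (finSplit h)).surjective g
  rw [dualizePair_reindex, det_reindex_self]
  exact isUnit_det_dualizeBlocks (by rwa [det_reindex_self] at hg)

theorem exists_memH'_dualizePair_mul (g : Matrix (Fin n) (Fin n) ℝ)
    {h : Matrix (Fin n) (Fin n) ℝ} (hh : memH' d h) :
    ∃ h', memH' d h' ∧ dualizePair d (g * h) = dualizePair d g * h' := by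
  obtain ⟨hle, γ, v, δ, hγ, hδ, rfl⟩ := hh
  obtain ⟨G, rfl⟩ := (reindex (finSplit hle) (finSplit hle)).surjective g
  have hδ' : IsUnit (δ⁻¹)ᵀ.det := by
    rw [det_transpose]
    exact isUnit_nonsing_inv_det δ hδ
  have hγR : IsUnit (γ.map fun a => (a : ℝ)).det := isUnit_det_map (Int.castRingHom ℝ) hγ
  have hδR : IsUnit (δ.map fun a => (a : ℝ)).det := isUnit_det_map (Int.castRingHom ℝ) hδ
  have hinv : ((δ.map fun a => (a : ℝ))⁻¹)ᵀ = ((δ⁻¹)ᵀ).map fun a => (a : ℝ) := by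
    rw [transpose_map]
    exact congrArg transpose (inv_map_of_isUnit_det (Int.castRingHom ℝ) hδ)
  refine ⟨_, memH'_reindex_fromBlocks hle hγ hδ' 0, ?_⟩
  change dualizePair d (_ * reindex (finSplit hle) (finSplit hle) _) = _
  rw [← reindex_finSplit_mul, dualizePair_reindex, dualizePair_reindex,
    dualizeBlocks_mul_fromBlocks _ _ hγR hδR, hinv, reindex_finSplit_mul]

theorem exists_memH'_dualizePair_dualizePair (h : d ≤ n) {g : Matrix (Fin n) (Fin n) ℝ}
    (hg : IsUnit g.det) : ∃ h', memH' d h' ∧ dualizePair d (dualizePair d g) = g * h' := by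
  obtain ⟨G, rfl⟩ := (reindex (finSplit h) (finSplit h)).surjective g
  have hG : IsUnit G.det := by rwa [det_reindex_self] at hg
  refine ⟨_, ?_, by rw [dualizePair_reindex, dualizePair_reindex, dualizeBlocks_dualizeBlocks hG,
    reindex_finSplit_mul]⟩
  simpa using memH'_reindex_fromBlocks h (γ := 1) (δ := 1) (by simp) (by simp)
    (-(((toCols₁ G)ᵀ * toCols₁ G)⁻¹ * ((toCols₁ G)ᵀ * toCols₂ G)))

theorem zspan_lastColsR_dualizePair (h : d ≤ n) {g : Matrix (Fin n) (Fin n) ℝ}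
    (hg : IsUnit g.det) {π : (Fin n → ℝ) →ₗ[ℝ] (Fin n → ℝ)}
    (hπ : IsProjectionOntoPerp
      (Submodule.span ℝ (Set.range fun j : Fin d => fun i => firstColsR h g i j)) π) :
    zspan (lastColsR h (dualizePair d g)) =
      dualLattice (zspan (of fun i j => π (fun k => lastColsR h g k j) i)) := by
  have hlast : lastColsR h (dualizePair d g) = toCols₂ (((gᵀ)⁻¹).submatrix id (finSplit h)) := by
    ext i k
    simp only [lastColsR, dualizePair, of_apply]
    rw [if_neg (by omega)]
    rfl
  have hNt : (((gᵀ)⁻¹).submatrix id (finSplit h))ᵀ = g⁻¹.submatrix (finSplit h) id := by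
    rw [transpose_submatrix, transpose_nonsing_inv, transpose_transpose]
  rw [hlast]
  refine zspan_toCols₂_eq_dualLattice (M := g.submatrix id (finSplit h)) ?_ ?_ hπ
  · rw [hNt, submatrix_mul_equiv, mul_nonsing_inv _ hg, submatrix_id_id]
  · rw [hNt, ← submatrix_mul _ _ _ _ _ Function.bijective_id, nonsing_inv_mul _ hg,
      submatrix_one_equiv]

end DualizePair

/-- `f'(g) = [B | D]` (with `D` the last `n-d` columns of
`(gᵀ)⁻¹`) maps `GL_n(ℝ)` to itself, descends to the coset space
`GL_n(ℝ)/H'`, is an involution modulo `H'`, and on the level of pairs of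
lattices it is the map `(Λ, L) ↦ (Λ, L*)`. -/
theorem stmt15 (n d : ℕ) (hdn : d ≤ n - 1) :
    (∀ g : Matrix (Fin n) (Fin n) ℝ, IsUnit g.det →
      IsUnit (dualizePair d g).det) ∧
    (∀ g h : Matrix (Fin n) (Fin n) ℝ, IsUnit g.det → memH' d h →
      ∃ h' : Matrix (Fin n) (Fin n) ℝ, memH' d h' ∧
        dualizePair d (g * h) = dualizePair d g * h') ∧
    (∀ g : Matrix (Fin n) (Fin n) ℝ, IsUnit g.det →
      ∃ h : Matrix (Fin n) (Fin n) ℝ, memH' d h ∧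
        dualizePair d (dualizePair d g) = g * h) ∧
    (∀ g : Matrix (Fin n) (Fin n) ℝ, IsUnit g.det →
      ∀ π : (Fin n → ℝ) →ₗ[ℝ] (Fin n → ℝ),
        (∀ x : Fin n → ℝ,
          π x ∈ perp (Submodule.span ℝ (Set.range fun j : Fin d =>
            fun i : Fin n => firstColsR (show d ≤ n by omega) g i j)) ∧
          x - π x ∈ Submodule.span ℝ (Set.range fun j : Fin d =>
            fun i : Fin n => firstColsR (show d ≤ n by omega) g i j)) →
        zspan (lastColsR (show d ≤ n by omega) (dualizePair d g)) =
          dualLattice (zspan (Matrix.of fun (i : Fin n) (j : Fin (n - d)) =>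
            π (fun k : Fin n => lastColsR (show d ≤ n by omega) g k j) i))) := by
  have h : d ≤ n := hdn.trans (Nat.sub_le n 1)
  exact ⟨fun g hg => isUnit_det_dualizePair h hg,
    fun g _ _ hh => exists_memH'_dualizePair_mul g hh,
    fun g hg => exists_memH'_dualizePair_dualizePair h hg,
    fun g hg π hπ => zspan_lastColsR_dualizePair h hg hπ⟩
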